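/- If S is a symmetric positive definite d×d matrix and ξ is a symmetric d×d matrix, then the retraction R_S(ξ) = S + ξ + ½ ξ S⁻¹ ξ is symmetric and satisfies R_S(ξ) = ½(S + (S+ξ)S⁻¹(S+ξ)ᵀ), so that xᵀR_S(ξ)x = ½ xᵀSx + ½ (S⁻¹)-weighted norm of (S+ξ)x > 0 for all x ≠ 0; hence R_S(ξ) is positive definite. -/

import Mathlib

open Matrix

/-- For `S` symmetric positive definite and `ξ` symmetric, the retraction
`R_S(ξ) = S + ξ + ½ ξ S⁻¹ ξ` satisfies the identity
`R_S(ξ) = ½ S + ½ (S+ξ) S⁻¹ (S+ξ)` and is symmetric positive definite. -/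
theorem retraction_posDef {d : ℕ} (S ξ : Matrix (Fin d) (Fin d) ℝ)
    (hS : S.PosDef) (hξ : ξ.IsSymm) :
    S + ξ + (1 / 2 : ℝ) • (ξ * S⁻¹ * ξ)
      = (1 / 2 : ℝ) • S + (1 / 2 : ℝ) • ((S + ξ) * S⁻¹ * (S + ξ))
    ∧ (S + ξ + (1 / 2 : ℝ) • (ξ * S⁻¹ * ξ)).PosDef := by
  have hdet : IsUnit S.det := hS.det_pos.ne'.isUnit
  have hSi : S * S⁻¹ = 1 := mul_nonsing_inv S hdet
  have hiS : S⁻¹ * S = 1 := nonsing_inv_mul S hdet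
  have hexp : (S + ξ) * S⁻¹ * (S + ξ) = S + ξ + ξ + ξ * S⁻¹ * ξ := by
    have h : (S + ξ) * S⁻¹ = 1 + ξ * S⁻¹ := by rw [add_mul, hSi]
    rw [h, add_mul, one_mul, mul_add, mul_assoc ξ S⁻¹ S, hiS, mul_one]
    abel
  have hid : S + ξ + (1 / 2 : ℝ) • (ξ * S⁻¹ * ξ)
      = (1 / 2 : ℝ) • S + (1 / 2 : ℝ) • ((S + ξ) * S⁻¹ * (S + ξ)) := by
    rw [hexp]
    module
  refine ⟨hid, ?_⟩
  rw [hid]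
  have hinv : (S⁻¹).PosDef := hS.inv
  have hsym : (S + ξ)ᴴ = S + ξ := by
    have h1 : Sᴴ = S := hS.isHermitian
    have h2 : ξᴴ = ξ := by ext i j; simp [conjTranspose_apply, hξ.apply]
    rw [conjTranspose_add, h1, h2]
  have hps : ((S + ξ) * S⁻¹ * (S + ξ)).PosSemidef := by
    have := hinv.posSemidef.mul_mul_conjTranspose_same (S + ξ)
    rwa [hsym] at this
  have h1 : ((1 / 2 : ℝ) • S).PosDef := by
    refine PosDef.of_dotProduct_mulVec_pos (by simpa [Matrix.IsHermitian] using congrArg (fun M => (1/2:ℝ) • M) hS.isHermitian.eq) fun x hx => ?_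
    have := hS.dotProduct_mulVec_pos hx
    simp only [smul_mulVec, dotProduct_smul]
    positivity
  have h2 : ((1 / 2 : ℝ) • ((S + ξ) * S⁻¹ * (S + ξ))).PosSemidef := by
    refine PosSemidef.of_dotProduct_mulVec_nonneg (by simpa [Matrix.IsHermitian] using congrArg (fun M => (1/2:ℝ) • M) hps.isHermitian.eq) fun x => ?_
    have := hps.dotProduct_mulVec_nonneg x
    simp only [smul_mulVec, dotProduct_smul]
    positivity
  exact h1.add_posSemidef h2
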